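/- Let A be an n×n Hermitian matrix of rank r ≤ n with eigenvalues ordered λ₁ ≥ ⋯ ≥ λ_r and λ_{r+1} = ⋯ = λ_n = 0, and let E be Hermitian. Let A^{1/2} be a normal square root of A and k = ‖(A^{1/2})⁺ E (A^{1/2})⁺‖₂ (pseudoinverse, spectral norm). If k ≤ 1, then for every i ∈ {1,…,r}: λ_{n-r+i}(A+E) ≤ λ_i + k|λ_i|, where eigenvalues of A+E are in decreasing order. -/

import Mathlib

open Matrix
open scoped ComplexOrder

/-- The spectral norm (operator 2-norm) of a complex matrix. -/
noncomputable def specNorm {m n : Type*} [Fintype m] [Fintype n] [DecidableEq n]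
    (A : Matrix m n ℂ) : ℝ :=
  ‖LinearMap.toContinuousLinearMap (Matrix.toEuclideanLin A)‖

/-- `B` is the Moore–Penrose pseudoinverse of `A` (the four Penrose conditions). -/
def IsMP {m n : Type*} [Fintype m] [Fintype n]
    (A : Matrix m n ℂ) (B : Matrix n m ℂ) : Prop :=
  A * B * A = A ∧ B * A * B = B ∧ (A * B)ᴴ = A * B ∧ (B * A)ᴴ = B * A

/-! ### Auxiliary lemmas -/

lemma quad_bound {n : ℕ} (M : Matrix (Fin n) (Fin n) ℂ) (z w : Fin n → ℂ) :
    ‖star z ⬝ᵥ (M *ᵥ w)‖ ≤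
      specNorm M * (Real.sqrt (∑ j, Complex.normSq (z j)) * Real.sqrt (∑ j, Complex.normSq (w j))) := by
  classical
  set z' : EuclideanSpace ℂ (Fin n) := (WithLp.equiv 2 (Fin n → ℂ)).symm z
  set w' : EuclideanSpace ℂ (Fin n) := (WithLp.equiv 2 (Fin n → ℂ)).symm w
  have hz : ‖z'‖ = Real.sqrt (∑ j, Complex.normSq (z j)) := by
    rw [EuclideanSpace.norm_eq]
    congr 1
    refine Finset.sum_congr rfl fun j _ => ?_
    rw [← Complex.sq_norm]
    rfl
  have hw : ‖w'‖ = Real.sqrt (∑ j, Complex.normSq (w j)) := by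
    rw [EuclideanSpace.norm_eq]
    congr 1
    refine Finset.sum_congr rfl fun j _ => ?_
    rw [← Complex.sq_norm]
    rfl
  have hinner : (inner ℂ z' ((LinearMap.toContinuousLinearMap (Matrix.toEuclideanLin M)) w') : ℂ)
      = star z ⬝ᵥ (M *ᵥ w) := by
    rw [LinearMap.coe_toContinuousLinearMap']
    rw [Matrix.toEuclideanLin_apply]
    rw [PiLp.inner_apply]
    simp [dotProduct, z', w', mul_comm]
  calc ‖star z ⬝ᵥ (M *ᵥ w)‖
      = ‖(inner ℂ z' ((LinearMap.toContinuousLinearMap (Matrix.toEuclideanLin M)) w') : ℂ)‖ := by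
        rw [hinner]
    _ ≤ ‖z'‖ * ‖(LinearMap.toContinuousLinearMap (Matrix.toEuclideanLin M)) w'‖ :=
        norm_inner_le_norm _ _
    _ ≤ ‖z'‖ * (specNorm M * ‖w'‖) := by
        gcongr
        exact ContinuousLinearMap.le_opNorm _ _
    _ = specNorm M * (Real.sqrt (∑ j, Complex.normSq (z j)) * Real.sqrt (∑ j, Complex.normSq (w j))) := by
        rw [hz, hw]; ring

lemma mp_unique {n : ℕ} {S B C : Matrix (Fin n) (Fin n) ℂ}
    (hB : IsMP S B) (hC : IsMP S C) : B = C := by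
  obtain ⟨hB1, hB2, hB3, hB4⟩ := hB
  obtain ⟨hC1, hC2, hC3, hC4⟩ := hC
  have e1 : S * B = S * C := by
    calc S * B = (S * B)ᴴ := hB3.symm
      _ = Bᴴ * (S * C * S)ᴴ := by rw [hC1, conjTranspose_mul]
      _ = Bᴴ * (Sᴴ * (S * C)ᴴ) := by rw [conjTranspose_mul (S * C) S]
      _ = (S * B)ᴴ * (S * C)ᴴ := by rw [conjTranspose_mul S B]; noncomm_ring
      _ = (S * B) * (S * C) := by rw [hB3, hC3]
      _ = (S * B * S) * C := by noncomm_ring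
      _ = S * C := by rw [hB1]
  have e2 : B * S = C * S := by
    calc B * S = (B * S)ᴴ := hB4.symm
      _ = (S * C * S)ᴴ * Bᴴ := by rw [hC1, conjTranspose_mul]
      _ = ((C * S)ᴴ * Sᴴ) * Bᴴ := by rw [Matrix.mul_assoc S C S, conjTranspose_mul S (C * S)]
      _ = (C * S)ᴴ * (B * S)ᴴ := by rw [conjTranspose_mul B S]; noncomm_ring
      _ = (C * S) * (B * S) := by rw [hB4, hC4]
      _ = C * (S * B * S) := by noncomm_ring
      _ = C * S := by rw [hB1]
  calc B = B * S * B := hB2.symm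
    _ = B * (S * C) := by rw [← e1, Matrix.mul_assoc]
    _ = (C * S) * C := by rw [← Matrix.mul_assoc, e2]
    _ = C := hC2

lemma uconj_mul {n : ℕ} {V : Matrix (Fin n) (Fin n) ℂ} (hV : Vᴴ * V = 1)
    (f g : Fin n → ℂ) :
    (V * diagonal f * Vᴴ) * (V * diagonal g * Vᴴ) = V * diagonal (fun j => f j * g j) * Vᴴ := by
  calc (V * diagonal f * Vᴴ) * (V * diagonal g * Vᴴ)
      = V * diagonal f * (Vᴴ * V) * diagonal g * Vᴴ := by noncomm_ring
    _ = V * (diagonal f * diagonal g) * Vᴴ := by rw [hV]; noncomm_ring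
    _ = V * diagonal (fun j => f j * g j) * Vᴴ := by rw [diagonal_mul_diagonal]

lemma uconj_conjT {n : ℕ} {V : Matrix (Fin n) (Fin n) ℂ} (f : Fin n → ℂ) :
    (V * diagonal f * Vᴴ)ᴴ = V * diagonal (fun j => star (f j)) * Vᴴ := by
  rw [conjTranspose_mul, conjTranspose_mul, conjTranspose_conjTranspose, diagonal_conjTranspose]
  noncomm_ring

lemma explicit_mp {n : ℕ} {V : Matrix (Fin n) (Fin n) ℂ} (hV : Vᴴ * V = 1)
    (lam : Fin n → ℝ) :
    IsMP (V * diagonal (fun j => ((lam j : ℂ)) ^ ((1 : ℂ)/2)) * Vᴴ)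
      (V * diagonal (fun j => if lam j = 0 then 0 else (((lam j : ℂ)) ^ ((1 : ℂ)/2))⁻¹) * Vᴴ) := by
  classical
  set s : Fin n → ℂ := fun j => ((lam j : ℂ)) ^ ((1 : ℂ)/2) with hs
  set p : Fin n → ℂ := fun j => if lam j = 0 then 0 else (s j)⁻¹ with hp
  have hsne : ∀ j, lam j ≠ 0 → s j ≠ 0 := fun j h => by
    simp only [hs, Ne, Complex.cpow_eq_zero_iff, not_and_or]
    left; exact fun hc => h (by exact_mod_cast hc)
  have hs0 : ∀ j, lam j = 0 → s j = 0 := fun j h => by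
    simp only [hs, h, Complex.ofReal_zero]
    exact Complex.zero_cpow (by norm_num)
  have hsp : ∀ j, s j * p j = if lam j = 0 then 0 else 1 := fun j => by
    by_cases h : lam j = 0
    · simp [hp, h]
    · simp [hp, h, mul_inv_cancel₀ (hsne j h)]
  have hps : ∀ j, p j * s j = if lam j = 0 then 0 else 1 := fun j => by
    by_cases h : lam j = 0
    · simp [hp, h]
    · simp [hp, h, inv_mul_cancel₀ (hsne j h)]
  have key : ∀ f g : Fin n → ℂ, (∀ j, f j = g j) →
      V * diagonal f * Vᴴ = V * diagonal g * Vᴴ := by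
    intro f g h; rw [show f = g from funext h]
  refine ⟨?_, ?_, ?_, ?_⟩
  · rw [uconj_mul hV, uconj_mul hV]
    refine key _ _ fun j => ?_
    by_cases h : lam j = 0
    · simp [hs0 j h]
    · rw [hsp j, if_neg h, one_mul]
  · rw [uconj_mul hV, uconj_mul hV]
    refine key _ _ fun j => ?_
    by_cases h : lam j = 0
    · simp [hp, h]
    · rw [hps j, if_neg h, one_mul]
  · rw [uconj_mul hV, uconj_conjT]
    refine key _ _ fun j => ?_
    rw [hsp j]
    by_cases h : lam j = 0 <;> simp [h]
  · rw [uconj_mul hV, uconj_conjT]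
    refine key _ _ fun j => ?_
    rw [hps j]
    by_cases h : lam j = 0 <;> simp [h]

/-- The submodule of vectors supported on a finset `T`. -/
noncomputable def suppSub (n : ℕ) (T : Finset (Fin n)) : Submodule ℂ (Fin n → ℂ) where
  carrier := {c | ∀ j ∉ T, c j = 0}
  add_mem' := by intro a b ha hb j hj; simp [ha j hj, hb j hj]
  zero_mem' := by intro j hj; rfl
  smul_mem' := by intro a c hc j hj; simp [hc j hj]

noncomputable def suppEquiv {n : ℕ} (T : Finset (Fin n)) : suppSub n T ≃ₗ[ℂ] (T → ℂ) where
  toFun x := fun j => x.1 j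
  map_add' x y := rfl
  map_smul' a x := rfl
  invFun y := ⟨fun j => if h : j ∈ T then y ⟨j, h⟩ else 0, by
    intro j hj; simp [hj]⟩
  left_inv x := by
    ext j
    by_cases h : j ∈ T
    · simp [h]
    · simp [h, x.2 j h]
  right_inv y := by
    ext j
    simp [j.2]

lemma finrank_suppSub {n : ℕ} (T : Finset (Fin n)) :
    Module.finrank ℂ (suppSub n T) = T.card := by
  rw [LinearEquiv.finrank_eq (suppEquiv T), Module.finrank_fintype_fun_eq_card,
    Fintype.card_coe]

/-- Image of `suppSub` under a unitary `V`. -/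
noncomputable def uSub {n : ℕ} (V : Matrix (Fin n) (Fin n) ℂ) (T : Finset (Fin n)) :
    Submodule ℂ (Fin n → ℂ) :=
  Submodule.map (Matrix.mulVecLin V) (suppSub n T)

noncomputable def uEquiv {n : ℕ} {V : Matrix (Fin n) (Fin n) ℂ}
    (h1 : Vᴴ * V = 1) (h2 : V * Vᴴ = 1) : (Fin n → ℂ) ≃ₗ[ℂ] (Fin n → ℂ) :=
  LinearEquiv.ofLinear (Matrix.mulVecLin V) (Matrix.mulVecLin Vᴴ)
    (by rw [← Matrix.mulVecLin_mul, h2, Matrix.mulVecLin_one])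
    (by rw [← Matrix.mulVecLin_mul, h1, Matrix.mulVecLin_one])

lemma finrank_uSub {n : ℕ} {V : Matrix (Fin n) (Fin n) ℂ}
    (h1 : Vᴴ * V = 1) (h2 : V * Vᴴ = 1) (T : Finset (Fin n)) :
    Module.finrank ℂ (uSub V T) = T.card := by
  have : uSub V T = Submodule.map (uEquiv h1 h2 : (Fin n → ℂ) →ₗ[ℂ] (Fin n → ℂ)) (suppSub n T) := rfl
  rw [this, LinearEquiv.finrank_map_eq, finrank_suppSub]

lemma exists_mem_inf_ne_zero {n : ℕ} (U₁ U₂ : Submodule ℂ (Fin n → ℂ))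
    (h : n < Module.finrank ℂ U₁ + Module.finrank ℂ U₂) :
    ∃ x : Fin n → ℂ, x ≠ 0 ∧ x ∈ U₁ ∧ x ∈ U₂ := by
  have hsum := Submodule.finrank_sup_add_finrank_inf_eq U₁ U₂
  have hle : Module.finrank ℂ (U₁ ⊔ U₂ : Submodule ℂ (Fin n → ℂ)) ≤ n := by
    have := Submodule.finrank_le (U₁ ⊔ U₂)
    rwa [Module.finrank_fintype_fun_eq_card, Fintype.card_fin] at this
  have hpos : 0 < Module.finrank ℂ (U₁ ⊓ U₂ : Submodule ℂ (Fin n → ℂ)) := by omega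
  rw [Module.finrank_pos_iff] at hpos
  obtain ⟨⟨x, hx⟩, hne⟩ := exists_ne (0 : (U₁ ⊓ U₂ : Submodule ℂ (Fin n → ℂ)))
  refine ⟨x, ?_, (Submodule.mem_inf.mp hx).1, (Submodule.mem_inf.mp hx).2⟩
  intro h0
  exact hne (Subtype.ext h0)

lemma card_filter_Ico {n : ℕ} (a b : ℕ) (hb : b ≤ n) :
    (Finset.univ.filter fun j : Fin n => a ≤ (j : ℕ) ∧ (j : ℕ) < b).card = b - a := by
  rw [← Nat.card_Ico a b]
  refine Finset.card_bij' (fun (j : Fin n) _ => (j : ℕ))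
    (fun (m : ℕ) (hm : m ∈ Finset.Ico a b) =>
      (⟨m, lt_of_lt_of_le (Finset.mem_Ico.mp hm).2 hb⟩ : Fin n))
    ?_ ?_ ?_ ?_
  · intro j hj
    simp only [Finset.mem_filter] at hj
    exact Finset.mem_Ico.mpr hj.2
  · intro m hm
    simp only [Finset.mem_filter, Finset.mem_univ, true_and]
    exact Finset.mem_Ico.mp hm
  · intro j hj; rfl
  · intro m hm; rfl

lemma unitary_dot {n : ℕ} {V : Matrix (Fin n) (Fin n) ℂ} (h1 : Vᴴ * V = 1)
    (u v : Fin n → ℂ) : star (V *ᵥ u) ⬝ᵥ (V *ᵥ v) = star u ⬝ᵥ v := by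
  rw [star_mulVec, Matrix.dotProduct_mulVec, vecMul_vecMul, h1, vecMul_one]

lemma uconj_mulVec {n : ℕ} {V : Matrix (Fin n) (Fin n) ℂ} (h1 : Vᴴ * V = 1)
    (f : Fin n → ℂ) (u : Fin n → ℂ) :
    (V * diagonal f * Vᴴ) *ᵥ (V *ᵥ u) = V *ᵥ (fun j => f j * u j) := by
  rw [mulVec_mulVec]
  have h2 : V * diagonal f * Vᴴ * V = V * diagonal f := by
    rw [Matrix.mul_assoc (V * diagonal f) Vᴴ V, h1, Matrix.mul_one]
  rw [h2, ← mulVec_mulVec]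
  have h3 : diagonal f *ᵥ u = fun j => f j * u j := funext fun j => mulVec_diagonal f u j
  rw [h3]

lemma dot_star_self {n : ℕ} (u : Fin n → ℂ) :
    star u ⬝ᵥ u = ((∑ j, Complex.normSq (u j) : ℝ) : ℂ) := by
  rw [Complex.ofReal_sum]
  refine Finset.sum_congr rfl fun j _ => ?_
  rw [Complex.normSq_eq_conj_mul_self]
  rfl

lemma quad_diag {n : ℕ} {V : Matrix (Fin n) (Fin n) ℂ} (h1 : Vᴴ * V = 1)
    (f : Fin n → ℂ) (c : Fin n → ℂ) :
    star (V *ᵥ c) ⬝ᵥ ((V * diagonal f * Vᴴ) *ᵥ (V *ᵥ c))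
      = ∑ j, f j * ((Complex.normSq (c j) : ℝ) : ℂ) := by
  rw [uconj_mulVec h1, unitary_dot h1]
  refine Finset.sum_congr rfl fun j _ => ?_
  rw [Complex.normSq_eq_conj_mul_self]
  show star (c j) * (f j * c j) = _
  rw [Complex.star_def]
  ring

lemma normSq_half_pow (t : ℝ) : Complex.normSq ((t : ℂ) ^ ((1:ℂ)/2)) = |t| := by
  have h : ((1:ℂ)/2) = (((1/2 : ℝ) : ℝ) : ℂ) := by norm_num
  rw [h, ← Complex.sq_norm, Complex.norm_cpow_real, Complex.norm_real, Real.norm_eq_abs]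
  rw [← Real.rpow_natCast (|t| ^ (1/2 : ℝ)) 2, ← Real.rpow_mul (abs_nonneg t)]
  norm_num

set_option maxHeartbeats 1600000 in
/-- Theorem 2.1, upper bound.  `A` Hermitian of rank `r ≤ n` with
eigenvalues `lam` (nonzero ones first, decreasing, then zeros), `E` Hermitian,
`B = ((A^{1/2})⁺` for the normal square root `A^{1/2} = V D^{1/2} Vᴴ`,
`k = ‖(A^{1/2})⁺ E (A^{1/2})⁺‖₂ ≤ 1`.  Then for `i < r`,
`λ_{n-r+i}(A+E) ≤ λ_i + k|λ_i|`, eigenvalues `mu` of `A+E` in decreasing order. -/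
theorem stmt0 (n r : ℕ) (hr : r ≤ n)
    (A E V W B : Matrix (Fin n) (Fin n) ℂ)
    (hA : A.IsHermitian) (hE : E.IsHermitian)
    (lam mu : Fin n → ℝ)
    (hV : V ∈ Matrix.unitaryGroup (Fin n) ℂ)
    (hAeig : A = V * Matrix.diagonal (fun i => (lam i : ℂ)) * Vᴴ)
    (hord : ∀ i j : Fin n, i ≤ j → (j : ℕ) < r → lam j ≤ lam i)
    (hnz : ∀ i : Fin n, (i : ℕ) < r → lam i ≠ 0)
    (hzero : ∀ i : Fin n, r ≤ (i : ℕ) → lam i = 0)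
    (hB : IsMP (V * Matrix.diagonal (fun i => ((lam i : ℂ)) ^ ((1 : ℂ)/2)) * Vᴴ) B)
    (hk : specNorm (B * E * B) ≤ 1)
    (hW : W ∈ Matrix.unitaryGroup (Fin n) ℂ)
    (hAE : A + E = W * Matrix.diagonal (fun i => (mu i : ℂ)) * Wᴴ)
    (hmu : Antitone mu) :
    ∀ i : Fin n, ∀ hi : (i : ℕ) < r,
      mu ⟨n - r + (i : ℕ), by omega⟩ ≤ lam i + specNorm (B * E * B) * |lam i| := by
  classical
  intro i hi
  -- unitarity facts
  have hV1 : Vᴴ * V = 1 := by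
    have := Matrix.mem_unitaryGroup_iff'.mp hV
    rwa [Matrix.star_eq_conjTranspose] at this
  have hV2 : V * Vᴴ = 1 := by
    have := Matrix.mem_unitaryGroup_iff.mp hV
    rwa [Matrix.star_eq_conjTranspose] at this
  have hW1 : Wᴴ * W = 1 := by
    have := Matrix.mem_unitaryGroup_iff'.mp hW
    rwa [Matrix.star_eq_conjTranspose] at this
  have hW2 : W * Wᴴ = 1 := by
    have := Matrix.mem_unitaryGroup_iff.mp hW
    rwa [Matrix.star_eq_conjTranspose] at this
  set k := specNorm (B * E * B) with hkdef
  have hk0 : 0 ≤ k := norm_nonneg _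
  set s : Fin n → ℂ := fun j => ((lam j : ℂ)) ^ ((1 : ℂ)/2) with hsdef
  set p : Fin n → ℂ := fun j => if lam j = 0 then 0 else (s j)⁻¹ with hpdef
  have hsne : ∀ j, lam j ≠ 0 → s j ≠ 0 := fun j h => by
    simp only [hsdef, Ne, Complex.cpow_eq_zero_iff, not_and_or]
    left; exact fun hc => h (by exact_mod_cast hc)
  have hBeq : B = V * diagonal p * Vᴴ := mp_unique hB (explicit_mp hV1 lam)
  -- the two subspaces
  set m : ℕ := n - r + (i : ℕ) with hmdef
  have hm : m < n := by omega
  set T₁ : Finset (Fin n) := Finset.univ.filter fun j : Fin n => (i : ℕ) ≤ (j : ℕ) ∧ (j : ℕ) < r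
    with hT₁
  set T₂ : Finset (Fin n) := Finset.univ.filter fun j : Fin n => 0 ≤ (j : ℕ) ∧ (j : ℕ) < m + 1
    with hT₂
  have hcard₁ : T₁.card = r - (i : ℕ) := card_filter_Ico _ _ hr
  have hcard₂ : T₂.card = m + 1 := by
    rw [hT₂, card_filter_Ico 0 (m+1) (by omega)]
    omega
  obtain ⟨x, hx0, hx1, hx2⟩ := exists_mem_inf_ne_zero (uSub V T₁) (uSub W T₂) (by
    rw [finrank_uSub hV1 hV2, finrank_uSub hW1 hW2, hcard₁, hcard₂]; omega)
  obtain ⟨c, hcmem, hcx⟩ := Submodule.mem_map.mp hx1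
  obtain ⟨d, hdmem, hdx⟩ := Submodule.mem_map.mp hx2
  rw [Matrix.mulVecLin_apply] at hcx hdx
  have hc : ∀ j ∉ T₁, c j = 0 := hcmem
  have hd : ∀ j ∉ T₂, d j = 0 := hdmem
  have hc0 : ∀ j : Fin n, c j ≠ 0 → ((i : ℕ) ≤ (j : ℕ) ∧ (j : ℕ) < r) := by
    intro j hj
    by_contra hcon
    refine hj (hc j ?_)
    simp only [hT₁, Finset.mem_filter, Finset.mem_univ, true_and]
    exact hcon
  have hd0 : ∀ j : Fin n, d j ≠ 0 → (j : ℕ) < m + 1 := by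
    intro j hj
    by_contra hcon
    refine hj (hd j ?_)
    simp only [hT₂, Finset.mem_filter, Finset.mem_univ, true_and]
    exact fun h => hcon h.2
  -- the auxiliary vectors
  obtain ⟨zc, hzcdef⟩ : ∃ zc : Fin n → ℂ, zc = fun j => star (s j) * c j := ⟨_, rfl⟩
  obtain ⟨wc, hwcdef⟩ : ∃ wc : Fin n → ℂ, wc = fun j => s j * c j := ⟨_, rfl⟩
  obtain ⟨z, hzdef⟩ : ∃ z : Fin n → ℂ, z = V *ᵥ zc := ⟨_, rfl⟩
  obtain ⟨w, hwdef⟩ : ∃ w : Fin n → ℂ, w = V *ᵥ wc := ⟨_, rfl⟩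
  have hclam : ∀ j : Fin n, lam j = 0 → c j = 0 := by
    intro j hlj
    by_contra hcj
    exact hnz j (hc0 j hcj).2 hlj
  have hBz : Bᴴ *ᵥ z = x := by
    rw [hBeq, uconj_conjT, hzdef, hzcdef, uconj_mulVec hV1, ← hcx]
    refine congrArg (fun v => V *ᵥ v) (funext fun j => ?_)
    show star (p j) * (star (s j) * c j) = c j
    by_cases hlj : lam j = 0
    · simp [hclam j hlj]
    · have hs : s j ≠ 0 := hsne j hlj
      have h1' : star ((s j)⁻¹) * star (s j) = 1 := by
        rw [star_inv₀, inv_mul_cancel₀ ((star_ne_zero (R := ℂ)).mpr hs)]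
      simp only [hpdef, if_neg hlj]
      rw [← mul_assoc, h1', one_mul]
  have hBw : B *ᵥ w = x := by
    rw [hBeq, hwdef, hwcdef, uconj_mulVec hV1, ← hcx]
    refine congrArg (fun v => V *ᵥ v) (funext fun j => ?_)
    show p j * (s j * c j) = c j
    by_cases hlj : lam j = 0
    · simp [hclam j hlj]
    · have hs : s j ≠ 0 := hsne j hlj
      simp only [hpdef, if_neg hlj]
      rw [← mul_assoc, inv_mul_cancel₀ hs, one_mul]
  have hqE : star z ⬝ᵥ ((B * E * B) *ᵥ w) = star x ⬝ᵥ (E *ᵥ x) := by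
    have e1 : B *ᵥ (E *ᵥ (B *ᵥ w)) = (B * E * B) *ᵥ w := by
      rw [mulVec_mulVec, mulVec_mulVec]
    calc star z ⬝ᵥ ((B * E * B) *ᵥ w)
        = star z ⬝ᵥ (B *ᵥ (E *ᵥ (B *ᵥ w))) := by rw [e1]
      _ = (star z ᵥ* B) ⬝ᵥ (E *ᵥ (B *ᵥ w)) := Matrix.dotProduct_mulVec _ _ _
      _ = star (Bᴴ *ᵥ z) ⬝ᵥ (E *ᵥ x) := by rw [star_mulVec, conjTranspose_conjTranspose, hBw]
      _ = star x ⬝ᵥ (E *ᵥ x) := by rw [hBz]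
  -- sums of squares
  set SL : ℝ := ∑ j, |lam j| * Complex.normSq (c j) with hSL
  have hSLnn : 0 ≤ SL := by
    apply Finset.sum_nonneg
    intro j _
    exact mul_nonneg (abs_nonneg _) (Complex.normSq_nonneg _)
  have hnormSqS : ∀ j, Complex.normSq (s j) = |lam j| := fun j => normSq_half_pow (lam j)
  have hSz : ∑ j, Complex.normSq (z j) = SL := by
    have e1 : ((∑ j, Complex.normSq (z j) : ℝ) : ℂ) = ((∑ j, Complex.normSq (zc j) : ℝ) : ℂ) := by
      rw [← dot_star_self, ← dot_star_self, hzdef, unitary_dot hV1]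
    have e2 : ∑ j, Complex.normSq (z j) = ∑ j, Complex.normSq (zc j) :=
      Complex.ofReal_injective e1
    rw [e2, hSL, hzcdef]
    refine Finset.sum_congr rfl fun j _ => ?_
    show Complex.normSq (star (s j) * c j) = _
    rw [Complex.normSq_mul, Complex.star_def, Complex.normSq_conj, hnormSqS j]
  have hSw : ∑ j, Complex.normSq (w j) = SL := by
    have e1 : ((∑ j, Complex.normSq (w j) : ℝ) : ℂ) = ((∑ j, Complex.normSq (wc j) : ℝ) : ℂ) := by
      rw [← dot_star_self, ← dot_star_self, hwdef, unitary_dot hV1]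
    have e2 : ∑ j, Complex.normSq (w j) = ∑ j, Complex.normSq (wc j) :=
      Complex.ofReal_injective e1
    rw [e2, hSL, hwcdef]
    refine Finset.sum_congr rfl fun j _ => ?_
    show Complex.normSq (s j * c j) = _
    rw [Complex.normSq_mul, hnormSqS j]
  have habs : ‖star z ⬝ᵥ ((B * E * B) *ᵥ w)‖ ≤ k * SL := by
    have h := quad_bound (B * E * B) z w
    rw [hSz, hSw, Real.mul_self_sqrt hSLnn] at h
    exact h
  have hqEre : (star x ⬝ᵥ (E *ᵥ x)).re ≤ k * SL := by
    rw [← hqE]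
    exact (Complex.re_le_norm _).trans habs
  have hqA : star x ⬝ᵥ (A *ᵥ x) = ((∑ j, lam j * Complex.normSq (c j) : ℝ) : ℂ) := by
    rw [← hcx, hAeig, quad_diag hV1, Complex.ofReal_sum]
    exact Finset.sum_congr rfl fun j _ => by push_cast; ring
  have hqmu : star x ⬝ᵥ ((A + E) *ᵥ x) = ((∑ j, mu j * Complex.normSq (d j) : ℝ) : ℂ) := by
    rw [hAE, ← hdx, quad_diag hW1, Complex.ofReal_sum]
    exact Finset.sum_congr rfl fun j _ => by push_cast; ring
  have hsplit : star x ⬝ᵥ ((A + E) *ᵥ x) = star x ⬝ᵥ (A *ᵥ x) + star x ⬝ᵥ (E *ᵥ x) := by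
    rw [add_mulVec, dotProduct_add]
  have hre : ∑ j, mu j * Complex.normSq (d j)
      = (∑ j, lam j * Complex.normSq (c j)) + (star x ⬝ᵥ (E *ᵥ x)).re := by
    have h := hsplit
    rw [hqmu, hqA] at h
    have h2 := congrArg Complex.re h
    simpa using h2
  have hScSd : ∑ j, Complex.normSq (c j) = ∑ j, Complex.normSq (d j) := by
    apply Complex.ofReal_injective
    rw [← dot_star_self, ← dot_star_self, ← unitary_dot hV1 c c, ← unitary_dot hW1 d d, hcx, hdx]
  have hcne : c ≠ 0 := by
    intro h
    apply hx0
    rw [← hcx, h, mulVec_zero]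
  have hScpos : 0 < ∑ j, Complex.normSq (c j) := by
    have hex : ∃ j, c j ≠ 0 := by
      by_contra h
      push_neg at h
      exact hcne (funext h)
    obtain ⟨j0, hj0⟩ := hex
    exact Finset.sum_pos' (fun j _ => Complex.normSq_nonneg _)
      ⟨j0, Finset.mem_univ _, Complex.normSq_pos.mpr hj0⟩
  have step1 : mu ⟨m, hm⟩ * ∑ j, Complex.normSq (d j) ≤ ∑ j, mu j * Complex.normSq (d j) := by
    rw [Finset.mul_sum]
    refine Finset.sum_le_sum fun j _ => ?_
    by_cases hdj : d j = 0
    · simp [hdj]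
    · have hjm : (j : ℕ) < m + 1 := hd0 j hdj
      refine mul_le_mul_of_nonneg_right (hmu ?_) (Complex.normSq_nonneg _)
      rw [Fin.le_def]
      show (j : ℕ) ≤ m
      omega
  have step2 : ∑ j, lam j * Complex.normSq (c j) + k * SL
      = ∑ j, (lam j + k * |lam j|) * Complex.normSq (c j) := by
    rw [hSL, Finset.mul_sum, ← Finset.sum_add_distrib]
    exact Finset.sum_congr rfl fun j _ => by ring
  have step3 : ∑ j, (lam j + k * |lam j|) * Complex.normSq (c j)
      ≤ (lam i + k * |lam i|) * ∑ j, Complex.normSq (c j) := by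
    rw [Finset.mul_sum]
    refine Finset.sum_le_sum fun j _ => ?_
    by_cases hcj : c j = 0
    · simp [hcj]
    · obtain ⟨hij, hjr⟩ := hc0 j hcj
      have hlml : lam j ≤ lam i := hord i j (by rw [Fin.le_def]; exact hij) hjr
      refine mul_le_mul_of_nonneg_right ?_ (Complex.normSq_nonneg _)
      rcases abs_cases (lam i) with ⟨ha1, ha2⟩ | ⟨ha1, ha2⟩ <;>
        rcases abs_cases (lam j) with ⟨hb1, hb2⟩ | ⟨hb1, hb2⟩ <;> nlinarith [hk0, hk]
  have final : mu ⟨m, hm⟩ * ∑ j, Complex.normSq (c j)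
      ≤ (lam i + k * |lam i|) * ∑ j, Complex.normSq (c j) := by
    calc mu ⟨m, hm⟩ * ∑ j, Complex.normSq (c j)
        = mu ⟨m, hm⟩ * ∑ j, Complex.normSq (d j) := by rw [hScSd]
      _ ≤ ∑ j, mu j * Complex.normSq (d j) := step1
      _ = (∑ j, lam j * Complex.normSq (c j)) + (star x ⬝ᵥ (E *ᵥ x)).re := hre
      _ ≤ (∑ j, lam j * Complex.normSq (c j)) + k * SL := by linarith [hqEre]
      _ = ∑ j, (lam j + k * |lam j|) * Complex.normSq (c j) := step2
      _ ≤ (lam i + k * |lam i|) * ∑ j, Complex.normSq (c j) := step3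
  exact le_of_mul_le_mul_right final hScpos
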